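/- Let V = b + a/H with H ~ Lognormal(0, σ²), a > 0, σ > 0. Then the virtual valuation c(v) = v + F(v)/f(v) satisfies c(v) > v for all v > b, and c(v) → b as v → b⁺. -/

import Mathlib

open MeasureTheory Real Set Filter
open scoped Topology

/-- Standard normal PDF. -/
noncomputable def stdPdf (z : ℝ) : ℝ := (Real.sqrt (2 * Real.pi))⁻¹ * Real.exp (-z ^ 2 / 2)

/-- Standard normal CDF. -/
noncomputable def stdCdf (z : ℝ) : ℝ := ∫ t in Set.Iic z, stdPdf t

/-- PDF of a Lognormal(0, σ²) random variable. -/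
noncomputable def lnPdf (σ h : ℝ) : ℝ :=
  (h * σ * Real.sqrt (2 * Real.pi))⁻¹ * Real.exp (-(Real.log h) ^ 2 / (2 * σ ^ 2))

/-- CDF of the valuation V = b + a/H, H ~ Lognormal(0, σ²). -/
noncomputable def Fval (σ a b v : ℝ) : ℝ := stdCdf (Real.log ((v - b) / a) / σ)

/-- PDF of the valuation V = b + a/H, via change of variables. -/
noncomputable def fval (σ a b v : ℝ) : ℝ := lnPdf σ (a / (v - b)) * (a / (v - b) ^ 2)

/-- Virtual valuation c(v) = v + F(v)/f(v). -/
noncomputable def cval (σ a b v : ℝ) : ℝ := v + Fval σ a b v / fval σ a b v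

lemma sqrt_two_pi_pos : 0 < Real.sqrt (2 * Real.pi) :=
  Real.sqrt_pos.2 (by positivity)

lemma stdPdf_pos (z : ℝ) : 0 < stdPdf z := by
  unfold stdPdf
  have h := sqrt_two_pi_pos
  positivity

lemma stdPdf_eq' : stdPdf = fun z => (Real.sqrt (2 * Real.pi))⁻¹ * Real.exp (-(1/2 : ℝ) * z ^ 2) := by
  funext z
  unfold stdPdf
  congr 1
  ring_nf

lemma integrable_stdPdf : Integrable stdPdf := by
  rw [stdPdf_eq']
  exact (integrable_exp_neg_mul_sq (by norm_num : (0:ℝ) < 1/2)).const_mul _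

lemma integrable_mul_stdPdf : Integrable (fun t => t * stdPdf t) := by
  have h := (integrable_mul_exp_neg_mul_sq (by norm_num : (0:ℝ) < 1/2)).const_mul
    ((Real.sqrt (2 * Real.pi))⁻¹)
  refine h.congr (Eventually.of_forall fun t => ?_)
  rw [stdPdf_eq']
  ring

lemma stdCdf_pos (z : ℝ) : 0 < stdCdf z := by
  unfold stdCdf
  refine (setIntegral_pos_iff_support_of_nonneg_ae
    (Eventually.of_forall fun x => (stdPdf_pos x).le) integrable_stdPdf.integrableOn).2 ?_
  have hs : Function.support stdPdf = Set.univ := by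
    ext x; simp [Function.mem_support, (stdPdf_pos x).ne']
  rw [hs, Set.univ_inter, Real.volume_Iic]
  simp

lemma hasDerivAt_negStdPdf (t : ℝ) : HasDerivAt (fun s => -stdPdf s) (t * stdPdf t) t := by
  have h1 : HasDerivAt (fun s : ℝ => -s ^ 2 / 2) (-t) t := by
    have h := ((hasDerivAt_pow 2 t).neg).div_const 2
    refine h.congr_deriv ?_
    rw [show (2:ℕ) - 1 = 1 by norm_num]
    push_cast
    ring
  have h2 := (h1.exp.const_mul ((Real.sqrt (2 * Real.pi))⁻¹)).neg
  have hfun : (fun s => -stdPdf s) = fun s =>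
      -((Real.sqrt (2 * Real.pi))⁻¹ * Real.exp (-s ^ 2 / 2)) := by
    funext s; rw [stdPdf]
  rw [hfun, stdPdf]
  refine h2.congr_deriv ?_
  ring

lemma tendsto_negStdPdf_atBot : Tendsto (fun s => -stdPdf s) atBot (𝓝 0) := by
  have hsq : Tendsto (fun s : ℝ => s * s) atBot atTop :=
    Filter.Tendsto.atBot_mul_atBot₀ tendsto_id tendsto_id
  have h1 : Tendsto (fun s : ℝ => -s ^ 2 / 2) atBot atBot := by
    have := (tendsto_neg_atTop_atBot.comp hsq).atBot_div_const (by norm_num : (0:ℝ) < 2)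
    refine this.congr fun s => ?_
    simp [pow_two]
  have h2 : Tendsto (fun s : ℝ => Real.exp (-s ^ 2 / 2)) atBot (𝓝 0) :=
    Real.tendsto_exp_atBot.comp h1
  have h3 := (h2.const_mul ((Real.sqrt (2 * Real.pi))⁻¹)).neg
  simpa [stdPdf] using h3

lemma key_integral (z : ℝ) : ∫ t in Set.Iic z, t * stdPdf t = -stdPdf z := by
  have h := integral_Iic_of_hasDerivAt_of_tendsto' (f := fun s => -stdPdf s)
    (f' := fun t => t * stdPdf t) (a := z) (m := 0)
    (fun x _ => hasDerivAt_negStdPdf x) integrable_mul_stdPdf.integrableOn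
    tendsto_negStdPdf_atBot
  simpa using h

lemma mills (z : ℝ) (hz : z < 0) : stdCdf z ≤ stdPdf z / (-z) := by
  have hkey : ∫ t in Set.Iic z, (t / z) * stdPdf t = stdPdf z / (-z) := by
    have : (fun t => (t / z) * stdPdf t) = fun t => z⁻¹ * (t * stdPdf t) := by
      funext t; ring
    rw [this, integral_const_mul, key_integral]
    rw [div_neg, mul_neg, mul_comm, div_eq_mul_inv]
  rw [stdCdf, ← hkey]
  refine setIntegral_mono_on integrable_stdPdf.integrableOn ?_ measurableSet_Iic ?_
  · have : (fun t => (t / z) * stdPdf t) = fun t => z⁻¹ * (t * stdPdf t) := by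
      funext t; ring
    rw [this]
    exact (integrable_mul_stdPdf.const_mul _).integrableOn
  · intro t ht
    have h1 : (1 : ℝ) ≤ t / z := (le_div_iff_of_neg hz).2 (by simpa using ht.out)
    nlinarith [stdPdf_pos t]

lemma fval_eq (σ a b v : ℝ) (hσ : 0 < σ) (ha : 0 < a) (hv : b < v) :
    fval σ a b v = stdPdf (Real.log ((v - b) / a) / σ) / (σ * (v - b)) := by
  have hu : 0 < v - b := sub_pos.2 hv
  have hs := sqrt_two_pi_pos
  unfold fval lnPdf stdPdf
  have hlog : Real.log (a / (v - b)) = -Real.log ((v - b) / a) := by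
    rw [← Real.log_inv, inv_div]
  rw [hlog]
  have hexp : -(-Real.log ((v - b) / a)) ^ 2 / (2 * σ ^ 2)
      = -(Real.log ((v - b) / a) / σ) ^ 2 / 2 := by
    rw [div_pow, neg_pow]
    ring
  rw [hexp]
  rw [eq_div_iff (by positivity : σ * (v - b) ≠ 0)]
  field_simp

lemma fval_pos (σ a b v : ℝ) (hσ : 0 < σ) (ha : 0 < a) (hv : b < v) :
    0 < fval σ a b v := by
  rw [fval_eq σ a b v hσ ha hv]
  have hu : 0 < v - b := sub_pos.2 hv
  have := stdPdf_pos (Real.log ((v - b) / a) / σ)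
  positivity

lemma ratio_le (σ a b v : ℝ) (hσ : 0 < σ) (ha : 0 < a) (h1 : b < v)
    (h2 : v < b + a * Real.exp (-σ)) :
    Fval σ a b v / fval σ a b v ≤ σ * (v - b) := by
  have hu : 0 < v - b := sub_pos.2 h1
  set z := Real.log ((v - b) / a) / σ with hz
  have hzlt : z < -1 := by
    have hd : (v - b) / a < Real.exp (-σ) := (div_lt_iff₀ ha).2 (by linarith)
    have hl : Real.log ((v - b) / a) < -σ := by
      calc Real.log ((v - b) / a) < Real.log (Real.exp (-σ)) :=
            Real.log_lt_log (by positivity) hd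
        _ = -σ := Real.log_exp _
    rw [hz, div_lt_iff₀ hσ]
    linarith
  have hzneg : z < 0 := by linarith
  have hm := mills z hzneg
  have hcdf_le : stdCdf z ≤ stdPdf z := by
    have hnz : (0:ℝ) < -z := by linarith
    have h3 : stdPdf z / -z ≤ stdPdf z := by
      rw [div_le_iff₀ hnz]
      nlinarith [stdPdf_pos z]
    linarith
  rw [fval_eq σ a b v hσ ha h1, Fval, ← hz]
  rw [div_div_eq_mul_div, div_le_iff₀ (stdPdf_pos z)]
  have h4 := mul_le_mul_of_nonneg_right hcdf_le (by positivity : (0:ℝ) ≤ σ * (v - b))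
  linarith

/-- The virtual valuation satisfies c(v) > v on (b, ∞) and c(v) → b as v → b⁺. -/
theorem virtual_valuation_gt_and_limit (σ a b : ℝ) (hσ : 0 < σ) (ha : 0 < a) :
    (∀ v : ℝ, b < v → v < cval σ a b v) ∧
      Filter.Tendsto (cval σ a b) (nhdsWithin b (Set.Ioi b)) (nhds b) := by
  constructor
  · intro v hv
    have h1 : 0 < Fval σ a b v / fval σ a b v :=
      div_pos (stdCdf_pos _) (fval_pos σ a b v hσ ha hv)
    rw [cval]
    linarith
  · have hmem : Set.Ioo b (b + a * Real.exp (-σ)) ∈ nhdsWithin b (Set.Ioi b) := by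
      refine Ioo_mem_nhdsGT_of_mem ⟨le_refl b, ?_⟩
      have : 0 < a * Real.exp (-σ) := by positivity
      linarith
    have hten0 : Tendsto (fun v => Fval σ a b v / fval σ a b v)
        (nhdsWithin b (Set.Ioi b)) (𝓝 0) := by
      have hg : Tendsto (fun v : ℝ => σ * (v - b)) (nhdsWithin b (Set.Ioi b)) (𝓝 0) := by
        have : Tendsto (fun v : ℝ => σ * (v - b)) (𝓝 b) (𝓝 (σ * (b - b))) :=
          (Continuous.tendsto (by continuity) b)
        simpa using this.mono_left nhdsWithin_le_nhds
      refine squeeze_zero' ?_ ?_ hg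
      · filter_upwards [self_mem_nhdsWithin] with v hv
        exact (div_pos (stdCdf_pos _) (fval_pos σ a b v hσ ha hv)).le
      · filter_upwards [hmem] with v hv
        exact ratio_le σ a b v hσ ha hv.1 hv.2
    have hid : Tendsto (fun v : ℝ => v) (nhdsWithin b (Set.Ioi b)) (𝓝 b) :=
      (continuous_id.tendsto b).mono_left nhdsWithin_le_nhds
    have := hid.add hten0
    rw [add_zero] at this
    exact this
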